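/- arXiv:2310.00787 — 2 statements merged into one kernel-verified Lean document; each statement's English description precedes it below -/
import Mathlib

section
/- A linear fractional map φ(z) = (az+b)/(cz+d) with ad - bc ≠ 0 maps the open unit disk into the closed unit disk if and only if |b·conj(d) - a·conj(c)| + |ad - bc| ≤ |d|² - |c|². -/
/-!
Put `E = b·conj d - a·conj c` and `D = ad - bc`. The identity
`(|d|² - |c|²)(az + b) = E(cz + d) + D(conj d·z + conj c)` writes
`(|d|² - |c|²)·φ` as `E + D·ψ`, where `ψ(z) = (conj d·z + conj c)/(cz + d)`. When `|c| < |d|`,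
`ψ` maps the closed disk into itself and the unit circle onto itself, so the supremum of
`(|d|² - |c|²)|φ|` over the disk is `|E| + |D|`, attained at the point of the circle where `D·ψ`
points in the direction of `E`. By continuity `|φ| ≤ 1` on the open disk extends to
`|az + b| ≤ |cz + d|` on the closed disk, which at the pole `-d/c` forces `|c| < |d|`.
-/

open ComplexConjugate Metric

namespace LinearFractional

theorem norm_sq_sub_norm_sq_mul_eq (a b c d z : ℂ) :
    ((‖d‖ ^ 2 - ‖c‖ ^ 2 : ℝ) : ℂ) * (a * z + b)
      = (b * conj d - a * conj c) * (c * z + d) + (a * d - b * c) * (conj d * z + conj c) := by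
  have hc : ((‖c‖ ^ 2 : ℝ) : ℂ) = c * conj c := by rw [Complex.mul_conj, Complex.normSq_eq_norm_sq]
  have hd : ((‖d‖ ^ 2 : ℝ) : ℂ) = d * conj d := by rw [Complex.mul_conj, Complex.normSq_eq_norm_sq]
  push_cast at hc hd ⊢
  rw [hc, hd]
  ring

theorem norm_sq_sub_norm_sq_conj (c d z : ℂ) :
    ‖c * z + d‖ ^ 2 - ‖conj d * z + conj c‖ ^ 2 = (‖d‖ ^ 2 - ‖c‖ ^ 2) * (1 - ‖z‖ ^ 2) := by
  simp only [← Complex.normSq_eq_norm_sq, Complex.normSq_apply, Complex.add_re, Complex.add_im,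
    Complex.mul_re, Complex.mul_im, Complex.conj_re, Complex.conj_im]
  ring

variable {a b c d z : ℂ}

theorem norm_conj_mul_add_le (hcd : ‖c‖ ≤ ‖d‖) (hz : ‖z‖ ≤ 1) :
    ‖conj d * z + conj c‖ ≤ ‖c * z + d‖ := by
  have hdiff : 0 ≤ (‖d‖ ^ 2 - ‖c‖ ^ 2) * (1 - ‖z‖ ^ 2) :=
    mul_nonneg (by nlinarith [norm_nonneg c]) (by nlinarith [norm_nonneg z])
  rw [← norm_sq_sub_norm_sq_conj] at hdiff
  exact le_of_sq_le_sq (by linarith) (norm_nonneg _)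

theorem mul_add_ne_zero (hcd : ‖c‖ < ‖d‖) (hz : ‖z‖ ≤ 1) : c * z + d ≠ 0 := by
  intro h0
  have : ‖d‖ ≤ ‖c‖ := by
    rw [eq_neg_of_add_eq_zero_right h0, norm_neg, norm_mul]
    exact mul_le_of_le_one_right (norm_nonneg c) hz
  exact this.not_gt hcd

theorem mul_add_ne_zero_of_ne_pole (hcd : c ≠ 0 ∨ d ≠ 0) (hz : z ≠ -d / c) :
    c * z + d ≠ 0 := by
  intro h0
  rcases eq_or_ne c 0 with rfl | hc
  · exact hcd.resolve_left (not_not.2 rfl) (by simpa using h0)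
  · exact hz (by field_simp; linear_combination h0)

theorem norm_lt_norm_of_bound (h : a * d - b * c ≠ 0)
    (hB : ‖b * conj d - a * conj c‖ + ‖a * d - b * c‖ ≤ ‖d‖ ^ 2 - ‖c‖ ^ 2) : ‖c‖ < ‖d‖ := by
  have hpos : 0 < ‖d‖ ^ 2 - ‖c‖ ^ 2 :=
    (add_pos_of_nonneg_of_pos (norm_nonneg _) (norm_pos_iff.2 h)).trans_le hB
  nlinarith [norm_nonneg c, norm_nonneg d]

theorem norm_le_of_bound (hcd : ‖c‖ < ‖d‖)
    (hB : ‖b * conj d - a * conj c‖ + ‖a * d - b * c‖ ≤ ‖d‖ ^ 2 - ‖c‖ ^ 2) (hz : ‖z‖ ≤ 1) :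
    ‖a * z + b‖ ≤ ‖c * z + d‖ := by
  have hpos : 0 < ‖d‖ ^ 2 - ‖c‖ ^ 2 := by nlinarith [norm_nonneg c]
  refine le_of_mul_le_mul_left ?_ hpos
  calc (‖d‖ ^ 2 - ‖c‖ ^ 2) * ‖a * z + b‖
      = ‖(b * conj d - a * conj c) * (c * z + d) + (a * d - b * c) * (conj d * z + conj c)‖ := by
        rw [← norm_sq_sub_norm_sq_mul_eq, norm_mul, Complex.norm_real, Real.norm_of_nonneg hpos.le]
    _ ≤ ‖b * conj d - a * conj c‖ * ‖c * z + d‖ + ‖a * d - b * c‖ * ‖c * z + d‖ := by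
        refine (norm_add_le _ _).trans ?_
        rw [norm_mul, norm_mul]
        gcongr
        exact norm_conj_mul_add_le hcd.le hz
    _ ≤ (‖d‖ ^ 2 - ‖c‖ ^ 2) * ‖c * z + d‖ := by
        rw [← add_mul]
        gcongr

open Complex in
theorem exists_norm_eq_one_norm_add_mul (E D : ℂ) :
    ∃ u : ℂ, ‖u‖ = 1 ∧ ‖E + D * u‖ = ‖E‖ + ‖D‖ := by
  refine ⟨exp (↑(arg E - arg D) * I), norm_exp_ofReal_mul_I _, ?_⟩
  have hD : D * exp (↑(arg E - arg D) * I) = ‖D‖ * exp (arg E * I) := by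
    nth_rw 1 [← norm_mul_exp_arg_mul_I D]
    rw [mul_assoc, ← exp_add]
    push_cast
    ring_nf
  calc ‖E + D * exp (↑(arg E - arg D) * I)‖ = ‖((‖E‖ + ‖D‖ : ℝ) : ℂ) * exp (arg E * I)‖ := by
        rw [hD]
        congr 1
        push_cast
        linear_combination -norm_mul_exp_arg_mul_I E
    _ = ‖E‖ + ‖D‖ := by
        rw [norm_mul, norm_exp_ofReal_mul_I, mul_one, norm_real,
          Real.norm_of_nonneg (by positivity)]

theorem exists_norm_eq_one_conj_eq_mul (hcd : ‖c‖ < ‖d‖) {u : ℂ} (hu : ‖u‖ = 1) :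
    ∃ z : ℂ, ‖z‖ = 1 ∧ conj d * z + conj c = u * (c * z + d) := by
  have hden : u * c - conj d ≠ 0 := by
    intro h0
    have : ‖u * c‖ = ‖conj d‖ := by rw [sub_eq_zero.1 h0]
    rw [norm_mul, hu, one_mul, RCLike.norm_conj] at this
    exact hcd.ne this
  have huu : u * conj u = 1 := by
    rw [Complex.mul_conj, Complex.normSq_eq_norm_sq, hu]
    norm_num
  have hnum : conj c - u * d = u * conj (u * c - conj d) := by
    simp only [map_sub, map_mul, Complex.conj_conj]
    linear_combination (-conj c) * huu
  refine ⟨(conj c - u * d) / (u * c - conj d), ?_, ?_⟩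
  · rw [norm_div, hnum, norm_mul, hu, one_mul, RCLike.norm_conj, div_self (norm_ne_zero_iff.2 hden)]
  · field_simp
    ring

theorem bound_of_norm_le (hcd : ‖c‖ < ‖d‖)
    (H : ∀ z : ℂ, ‖z‖ ≤ 1 → ‖a * z + b‖ ≤ ‖c * z + d‖) :
    ‖b * conj d - a * conj c‖ + ‖a * d - b * c‖ ≤ ‖d‖ ^ 2 - ‖c‖ ^ 2 := by
  obtain ⟨u, hu, hEDu⟩ := exists_norm_eq_one_norm_add_mul (b * conj d - a * conj c) (a * d - b * c)
  obtain ⟨z, hz, hψ⟩ := exists_norm_eq_one_conj_eq_mul hcd hu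
  have hpos : 0 ≤ ‖d‖ ^ 2 - ‖c‖ ^ 2 := by nlinarith [norm_nonneg c]
  have hnorm : (‖d‖ ^ 2 - ‖c‖ ^ 2) * ‖a * z + b‖
      = (‖b * conj d - a * conj c‖ + ‖a * d - b * c‖) * ‖c * z + d‖ := by
    rw [← hEDu, ← norm_mul, ← Real.norm_of_nonneg hpos, ← Complex.norm_real, ← norm_mul,
      norm_sq_sub_norm_sq_mul_eq, hψ]
    ring_nf
  refine le_of_mul_le_mul_right ?_ (norm_pos_iff.2 (mul_add_ne_zero hcd hz.le))
  rw [← hnorm]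
  exact mul_le_mul_of_nonneg_left (H z hz.le) hpos

theorem norm_lt_norm_of_norm_le (h : a * d - b * c ≠ 0)
    (H : ∀ z : ℂ, ‖z‖ ≤ 1 → ‖a * z + b‖ ≤ ‖c * z + d‖) : ‖c‖ < ‖d‖ := by
  by_contra! hle
  have hc : c ≠ 0 := by
    rintro rfl
    exact h (by rw [norm_le_zero_iff.1 (hle.trans norm_zero.le)]; ring)
  have hpole : c * (-d / c) + d = 0 := by field_simp; ring
  have hzero : a * (-d / c) + b = 0 := by
    have hnorm : ‖-d / c‖ ≤ 1 := by
      rw [norm_div, norm_neg]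
      exact div_le_one_of_le₀ hle (norm_nonneg c)
    simpa [hpole] using H (-d / c) hnorm
  exact h (by linear_combination a * hpole - c * hzero)

theorem norm_le_of_forall_norm_lt_one (hcd : c ≠ 0 ∨ d ≠ 0)
    (H : ∀ z : ℂ, ‖z‖ < 1 → ‖(a * z + b) / (c * z + d)‖ ≤ 1) :
    ∀ z : ℂ, ‖z‖ ≤ 1 → ‖a * z + b‖ ≤ ‖c * z + d‖ := by
  have hclosed : IsClosed {z : ℂ | ‖a * z + b‖ ≤ ‖c * z + d‖} :=
    isClosed_le (by fun_prop) (by fun_prop)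
  have hsub : ball 0 1 ∩ {-d / c}ᶜ ⊆ {z : ℂ | ‖a * z + b‖ ≤ ‖c * z + d‖} := by
    rintro w ⟨hw, hpole⟩
    have hne := mul_add_ne_zero_of_ne_pole hcd hpole
    have := H w (mem_ball_zero_iff.1 hw)
    rwa [norm_div, div_le_one (norm_pos_iff.2 hne)] at this
  have hball : ball (0 : ℂ) 1 ⊆ {z : ℂ | ‖a * z + b‖ ≤ ‖c * z + d‖} :=
    ((dense_compl_singleton _).open_subset_closure_inter isOpen_ball).trans
      (closure_minimal hsub hclosed)
  have hclosedBall := closure_minimal hball hclosed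
  rw [closure_ball 0 one_ne_zero] at hclosedBall
  exact fun z hz => hclosedBall (mem_closedBall_zero_iff.2 hz)

end LinearFractional

open LinearFractional in
/-- A linear fractional map `φ(z) = (az+b)/(cz+d)` with `ad - bc ≠ 0` maps the open unit
disk into the closed unit disk iff `|b·conj d - a·conj c| + |ad - bc| ≤ |d|² - |c|²`. -/
theorem lfm_self_map_disk_iff (a b c d : ℂ) (h : a * d - b * c ≠ 0) :
    (∀ z : ℂ, ‖z‖ < 1 → ‖(a * z + b) / (c * z + d)‖ ≤ 1) ↔
      ‖b * (starRingEnd ℂ) d - a * (starRingEnd ℂ) c‖ + ‖a * d - b * c‖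
        ≤ ‖d‖ ^ 2 - ‖c‖ ^ 2 := by
  constructor
  · intro hφ
    have hcd : c ≠ 0 ∨ d ≠ 0 := by
      by_contra! h0
      exact h (by rw [h0.1, h0.2]; ring)
    have H := norm_le_of_forall_norm_lt_one hcd hφ
    exact bound_of_norm_le (norm_lt_norm_of_norm_le h H) H
  · intro hB z hz
    have hcd := norm_lt_norm_of_bound h hB
    rw [norm_div, div_le_one (norm_pos_iff.2 (mul_add_ne_zero hcd hz.le))]
    exact norm_le_of_bound hcd hB hz.le
end

section
/- If a linear fractional map φ(z) = (Az+B)/(⟨z,C⟩+D) with D = 1 and |C| < 1, C ≠ 0, can be written as φ = RU·φ_{-C} + M for some matrices R, U and vector M (where φ_{-C} is the ball involution at α = -C), then the center M of the image ellipsoid φ(𝔹^N) satisfies M = (B - AC)/(1 - |C|²). -/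
/-- The inner product `⟨z,w⟩ = Σ zᵢ conj(wᵢ)` on `ℂ^N`. -/
noncomputable def herm {N : ℕ} (z w : EuclideanSpace ℂ (Fin N)) : ℂ :=
  ∑ i, z i * (starRingEnd ℂ) (w i)

/-- The ball involution `φ_α(z) = (α - P_α(z) - s_α Q_α(z))/(1 - ⟨z,α⟩)`, where
`P_α(z) = (⟨z,α⟩/⟨α,α⟩)·α`, `Q_α(z) = z - P_α(z)`, and `s_α = √(1-|α|²)`. -/
noncomputable def ballPhi {N : ℕ} (α z : EuclideanSpace ℂ (Fin N)) :
    EuclideanSpace ℂ (Fin N) :=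
  (1 - herm z α)⁻¹ •
    (α - (herm z α / herm α α) • α
      - ((Real.sqrt (1 - ‖α‖ ^ 2) : ℝ) : ℂ) • (z - (herm z α / herm α α) • α))

section Herm

variable {N : ℕ}

lemma herm_eq_inner (z w : EuclideanSpace ℂ (Fin N)) : herm z w = inner ℂ w z := by
  simp only [herm, PiLp.inner_apply, RCLike.inner_apply]

lemma herm_self (z : EuclideanSpace ℂ (Fin N)) : herm z z = (‖z‖ : ℂ) ^ 2 := by
  rw [herm_eq_inner, inner_self_eq_norm_sq_to_K]
  rfl

lemma herm_neg_left (z w : EuclideanSpace ℂ (Fin N)) : herm (-z) w = -herm z w := by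
  rw [herm_eq_inner, herm_eq_inner, inner_neg_right]

end Herm

lemma ballPhi_self {N : ℕ} (α : EuclideanSpace ℂ (Fin N)) : ballPhi α α = 0 := by
  rcases eq_or_ne α 0 with rfl | hα
  · simp [ballPhi]
  · have hαα : herm α α ≠ 0 := by simpa [herm_self] using hα
    simp [ballPhi, div_self hαα]

open Matrix in
theorem ellipsoid_center_general {N : ℕ} (A RU : Matrix (Fin N) (Fin N) ℂ)
    (B C M : EuclideanSpace ℂ (Fin N)) (hC : ‖C‖ < 1)
    (hdecomp : ∀ z : EuclideanSpace ℂ (Fin N), ‖z‖ < 1 →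
      (herm z C + 1)⁻¹ •
          ((WithLp.equiv 2 (Fin N → ℂ)).symm (A *ᵥ (WithLp.equiv 2 (Fin N → ℂ)) z) + B)
        = (WithLp.equiv 2 (Fin N → ℂ)).symm
            (RU *ᵥ (WithLp.equiv 2 (Fin N → ℂ)) (ballPhi (-C) z)) + M) :
    M = (1 - (‖C‖ : ℂ) ^ 2)⁻¹ •
      (B - (WithLp.equiv 2 (Fin N → ℂ)).symm (A *ᵥ (WithLp.equiv 2 (Fin N → ℂ)) C)) := by
  have key := hdecomp (-C) (by rwa [norm_neg])
  rw [ballPhi_self, herm_neg_left, herm_self] at key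
  simp only [WithLp.equiv_apply, WithLp.equiv_symm_apply, WithLp.ofLp_neg, WithLp.ofLp_zero,
    WithLp.toLp_neg, WithLp.toLp_zero, mulVec_neg, mulVec_zero, zero_add] at key ⊢
  rw [← key, neg_add_eq_sub, neg_add_eq_sub]

open Matrix in
/-- If the linear fractional map `φ(z) = (Az+B)/(⟨z,C⟩+1)` with `0 ≠ C`, `|C| < 1` can be
written as `φ = RU·φ_{-C} + M`, then the center `M` of the image ellipsoid satisfies
`M = (B - AC)/(1 - |C|²)`. -/
theorem ellipsoid_center {N : ℕ} (A RU : Matrix (Fin N) (Fin N) ℂ)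
    (B C M : EuclideanSpace ℂ (Fin N)) (hC0 : C ≠ 0) (hC : ‖C‖ < 1)
    (hdecomp : ∀ z : EuclideanSpace ℂ (Fin N), ‖z‖ < 1 →
      (herm z C + 1)⁻¹ •
          ((WithLp.equiv 2 (Fin N → ℂ)).symm (A *ᵥ (WithLp.equiv 2 (Fin N → ℂ)) z) + B)
        = (WithLp.equiv 2 (Fin N → ℂ)).symm
            (RU *ᵥ (WithLp.equiv 2 (Fin N → ℂ)) (ballPhi (-C) z)) + M) :
    M = (1 - (‖C‖ : ℂ) ^ 2)⁻¹ •
      (B - (WithLp.equiv 2 (Fin N → ℂ)).symm (A *ᵥ (WithLp.equiv 2 (Fin N → ℂ)) C)) :=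
  ellipsoid_center_general A RU B C M hC hdecomp
end
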